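/- Fix x and drop it from notation. Suppose for a, z ∈ {0,1} the quantities E_{az} := E[Y − M | A=a, Z=z, G=O] and P_{az} := P(A=a | Z=z, G=O) satisfy the Robins-type parametrization E_{az} = β₁(z)·a + γ₀(z)·(a − P_{1z}) + c for some constant c (where β₁(z), γ₀(z) are unknown), and suppose β₁ is constant in z (β₁(0) = β₁(1) = β₁) and P_{11} ≠ P_{10}. Then β₁ = (E[Y−M | Z=1, G=O] − E[Y−M | Z=0, G=O]) / (P_{11} − P_{10}), where E[Y−M | Z=z, G=O] = E_{1z}P_{1z} + E_{0z}P_{0z}. -/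
import Mathlib


open MeasureTheory

/-- Conditional expectation of `W` given the event `s`. -/
noncomputable def cexp {Ω : Type*} [MeasurableSpace Ω] (μ : Measure Ω)
    (W : Ω → ℝ) (s : Set Ω) : ℝ :=
  (∫ ω in s, W ω ∂μ) / (μ s).toReal

/-- Conditional probability of `s` given the event `t`. -/
noncomputable def cpr {Ω : Type*} [MeasurableSpace Ω] (μ : Measure Ω)
    (s t : Set Ω) : ℝ :=
  (μ (s ∩ t)).toReal / (μ t).toReal

/-- Conditional independence of the random variable `W` and the event `s`,
given the event `C`. -/
def CIset {Ω : Type*} [MeasurableSpace Ω] (μ : Measure Ω) {β : Type*} [MeasurableSpace β]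
    (W : Ω → β) (s C : Set Ω) : Prop :=
  ∀ S : Set β, MeasurableSet S →
    (μ (W ⁻¹' S ∩ s ∩ C)).toReal * (μ C).toReal
      = (μ (W ⁻¹' S ∩ C)).toReal * (μ (s ∩ C)).toReal

/-- Conditional independence of the random variables `W1` and `W2`
given the event `C`. -/
def CIfun2 {Ω : Type*} [MeasurableSpace Ω] (μ : Measure Ω)
    {β1 β2 : Type*} [MeasurableSpace β1] [MeasurableSpace β2]
    (W1 : Ω → β1) (W2 : Ω → β2) (C : Set Ω) : Prop :=
  ∀ (S1 : Set β1) (S2 : Set β2), MeasurableSet S1 → MeasurableSet S2 →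
    (μ (W1 ⁻¹' S1 ∩ W2 ⁻¹' S2 ∩ C)).toReal * (μ C).toReal
      = (μ (W1 ⁻¹' S1 ∩ C)).toReal * (μ (W2 ⁻¹' S2 ∩ C)).toReal

/-- Domain indicator: observational (`O`) or experimental (`E`). -/
inductive Dom : Type
  | O
  | E
deriving DecidableEq

/-- Conditional CDF of `W` given the event `C`. -/
noncomputable def ccdf {Ω : Type*} [MeasurableSpace Ω] (μ : Measure Ω)
    (W : Ω → ℝ) (C : Set Ω) (w : ℝ) : ℝ :=
  (μ ({ω | W ω ≤ w} ∩ C)).toReal / (μ C).toReal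


theorem stmt9 (E00 E01 E10 E11 P10 P11 : ℝ)
    (β₁ γ00 γ01 c : ℝ)
    (h00 : E00 = β₁ * 0 + γ00 * (0 - P10) + c)
    (h10 : E10 = β₁ * 1 + γ00 * (1 - P10) + c)
    (h01 : E01 = β₁ * 0 + γ01 * (0 - P11) + c)
    (h11 : E11 = β₁ * 1 + γ01 * (1 - P11) + c)
    (hP : P11 ≠ P10) :
    β₁ = ((E11 * P11 + E01 * (1 - P11)) - (E10 * P10 + E00 * (1 - P10))) / (P11 - P10) := by
  subst h00 h10 h01 h11
  field_simp [sub_ne_zero.mpr hP]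
  ring
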